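/- arXiv:1805.12205 — 2 statements merged into one kernel-verified Lean document; each statement's English description precedes it below -/
import Mathlib

section
/- If each f ∈ S is μ-homogeneous with factor α_f > 0 (μ(f(E)) = α_f μ(E) for all E ∈ Σ), then the assignment ν(B) = μ(f(B))/α_f for B with f(B) ⊆ X measurable is well-defined: if also g(B) ⊆ X is measurable with factor α_g, then μ(f(B))/α_f = μ(g(B))/α_g. -/
open MeasureTheory

def PQRel {X : Type*} (S : Set (X → X)) : (X × S) → (X × S) → Prop :=
  fun a b => (b.2 : X → X) a.1 = (a.2 : X → X) b.1

def IsAct {X : Type*} (S : Set (X → X)) (f : X → X)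
    (F : Quot (PQRel S) → Quot (PQRel S)) : Prop :=
  ∀ (x : X) (g : S), F (Quot.mk (PQRel S) (x, g)) = Quot.mk (PQRel S) (f x, g)

def IsIota {X : Type*} (S : Set (X → X)) (ι : X → Quot (PQRel S)) : Prop :=
  ∀ (x : X) (h : S), ι x = Quot.mk (PQRel S) ((h : X → X) x, h)

lemma pqrel_equiv {X : Type*} (S : Set (X → X))
    (hinj : ∀ f ∈ S, Function.Injective f)
    (hcomm : ∀ f ∈ S, ∀ g ∈ S, f ∘ g = g ∘ f) :
    Equivalence (PQRel S) := by
  constructor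
  · intro a; rfl
  · intro a b h; exact h.symm
  · rintro ⟨x, gx⟩ ⟨y, gy⟩ ⟨z, gz⟩ hab hbc
    simp only [PQRel] at *
    apply hinj gy gy.2
    calc (gy : X → X) ((gz : X → X) x)
        = (gz : X → X) ((gy : X → X) x) := congrFun (hcomm gy gy.2 gz gz.2) x
      _ = (gz : X → X) ((gx : X → X) y) := by rw [hab]
      _ = (gx : X → X) ((gz : X → X) y) := congrFun (hcomm gz gz.2 gx gx.2) y
      _ = (gx : X → X) ((gy : X → X) z) := by rw [hbc]
      _ = (gy : X → X) ((gx : X → X) z) := congrFun (hcomm gx gx.2 gy gy.2) z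

lemma half_subset {X : Type*} (S : Set (X → X))
    (hinj : ∀ f ∈ S, Function.Injective f)
    (hcomm : ∀ f ∈ S, ∀ g ∈ S, f ∘ g = g ∘ f)
    (ι : X → Quot (PQRel S)) (hι : IsIota S ι)
    (B : Set (Quot (PQRel S)))
    (f : X → X) (hf : f ∈ S)
    (Ff : Quot (PQRel S) → Quot (PQRel S)) (hFf : IsAct S f Ff)
    (g : X → X) (hg : g ∈ S)
    (Fg : Quot (PQRel S) → Quot (PQRel S)) (hFg : IsAct S g Fg)
    (hgB : Fg '' B ⊆ Set.range ι) :
    g '' (ι ⁻¹' (Ff '' B)) ⊆ f '' (ι ⁻¹' (Fg '' B)) := by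
  have heqv := pqrel_equiv S hinj hcomm
  rintro _ ⟨x, hx, rfl⟩
  obtain ⟨q, hqB, hq⟩ := hx
  obtain ⟨⟨z, h⟩, rfl⟩ := q.exists_rep
  rw [hFf, hι x h] at hq
  have h1 : (h : X → X) (f z) = (h : X → X) ((h : X → X) x) :=
    heqv.eqvGen_iff.mp (Quot.eq.mp hq)
  have hfz : f z = (h : X → X) x := hinj h h.2 h1
  have hmem : Fg (Quot.mk (PQRel S) (z, h)) ∈ Fg '' B := ⟨_, hqB, rfl⟩
  obtain ⟨y, hy⟩ := hgB hmem
  refine ⟨y, ⟨_, hqB, hy.symm⟩, ?_⟩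
  rw [hFg] at hy
  have hy' : Quot.mk (PQRel S) ((h : X → X) y, h) = Quot.mk (PQRel S) (g z, h) := by
    rw [← hι y h]; exact hy
  have h2 : (h : X → X) ((h : X → X) y) = (h : X → X) (g z) :=
    heqv.eqvGen_iff.mp (Quot.eq.mp hy')
  have hhy : (h : X → X) y = g z := hinj h h.2 h2
  apply hinj h h.2
  calc (h : X → X) (f y) = f ((h : X → X) y) := congrFun (hcomm h h.2 f hf) y
    _ = f (g z) := by rw [hhy]
    _ = g (f z) := congrFun (hcomm f hf g hg) z
    _ = g ((h : X → X) x) := by rw [hfz]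
    _ = (h : X → X) (g x) := congrFun (hcomm g hg h h.2) x

/-- if each `f ∈ S` is `μ`-homogeneous, the assignment
`ν(B) = μ(f(B))/α_f` is independent of the choice of `f`. -/
theorem nu_wellDefined {X : Type*} [MeasurableSpace X] (μ : Measure X)
    (S : Set (X → X))
    (hinj : ∀ f ∈ S, Function.Injective f)
    (hcomp : ∀ f ∈ S, ∀ g ∈ S, f ∘ g ∈ S)
    (hcomm : ∀ f ∈ S, ∀ g ∈ S, f ∘ g = g ∘ f)
    (hmeas : ∀ f ∈ S, Measurable f)
    (himg : ∀ f ∈ S, ∀ E : Set X, MeasurableSet E → MeasurableSet (f '' E))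
    (hhom : ∀ f ∈ S, ∃ α : ENNReal, 0 < α ∧ α ≠ ⊤ ∧
      ∀ E : Set X, MeasurableSet E → μ (f '' E) = α * μ E)
    (ι : X → Quot (PQRel S)) (hι : IsIota S ι)
    (B : Set (Quot (PQRel S)))
    (f : X → X) (hf : f ∈ S) (αf : ENNReal) (hαf : 0 < αf) (hαf' : αf ≠ ⊤)
    (hfhom : ∀ E : Set X, MeasurableSet E → μ (f '' E) = αf * μ E)
    (Ff : Quot (PQRel S) → Quot (PQRel S)) (hFf : IsAct S f Ff)
    (hfB : Ff '' B ⊆ Set.range ι) (hfBmeas : MeasurableSet (ι ⁻¹' (Ff '' B)))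
    (g : X → X) (hg : g ∈ S) (αg : ENNReal) (hαg : 0 < αg) (hαg' : αg ≠ ⊤)
    (hghom : ∀ E : Set X, MeasurableSet E → μ (g '' E) = αg * μ E)
    (Fg : Quot (PQRel S) → Quot (PQRel S)) (hFg : IsAct S g Fg)
    (hgB : Fg '' B ⊆ Set.range ι) (hgBmeas : MeasurableSet (ι ⁻¹' (Fg '' B))) :
    μ (ι ⁻¹' (Ff '' B)) / αf = μ (ι ⁻¹' (Fg '' B)) / αg := by
  have hset : g '' (ι ⁻¹' (Ff '' B)) = f '' (ι ⁻¹' (Fg '' B)) :=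
    Set.Subset.antisymm
      (half_subset S hinj hcomm ι hι B f hf Ff hFf g hg Fg hFg hgB)
      (half_subset S hinj hcomm ι hι B g hg Fg hFg f hf Ff hFf hfB)
  have hμ : αg * μ (ι ⁻¹' (Ff '' B)) = αf * μ (ι ⁻¹' (Fg '' B)) := by
    rw [← hghom _ hfBmeas, ← hfhom _ hgBmeas, hset]
  exact (ENNReal.div_eq_div_iff hαg.ne' hαg' hαf.ne' hαf').mpr hμ
end

section
/- Under the homogeneity assumption, the set function ν on the ring B defined by ν(B) = μ(f(B))/α_f (for any f ∈ S with f(B) ⊆ X measurable) is countably additive: if A₁, A₂, … ∈ B are pairwise disjoint and ⋃ₙ Aₙ ∈ B, then ν(⋃ₙ Aₙ) = Σₙ ν(Aₙ). -/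
open MeasureTheory

def MemB {X : Type*} [MeasurableSpace X] (S : Set (X → X))
    (ι : X → Quot (PQRel S)) (A : Set (Quot (PQRel S))) : Prop :=
  ∃ f ∈ S, ∃ F, IsAct S f F ∧ F '' A ⊆ Set.range ι ∧ MeasurableSet (ι ⁻¹' (F '' A))

/-!
Compute `ν (A n)` with the witness `(f, F)` of `⋃ n, A n ∈ B` rather than with the witness
`(g, G)` of `A n ∈ B`: `F (A n) ⊆ F (⋃ n, A n)` lies in `X`, and `ι⁻¹ (F (A n))` is measurable
because `g (ι⁻¹ (F (A n))) = f (ι⁻¹ (G (A n)))` by commutativity, with `g` measurable and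
injective. Then every `ν (A n)` is `μ (ι⁻¹ (F (A n))) / α_f`; these sets are pairwise disjoint
since `F` is injective, and countable additivity of `μ` gives the claim.
-/

open Function Set

section

variable {X : Type*} {S : Set (X → X)}

namespace PQRel

theorem equivalence (hinj : ∀ f ∈ S, Injective f) (hcomm : ∀ f ∈ S, ∀ g ∈ S, f ∘ g = g ∘ f) :
    Equivalence (PQRel S) := by
  have comm (p q : S) (x : X) : (p : X → X) ((q : X → X) x) = (q : X → X) ((p : X → X) x) :=
    congrFun (hcomm p p.2 q q.2) x
  refine ⟨fun _ => rfl, Eq.symm, ?_⟩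
  rintro ⟨x, g⟩ ⟨y, h⟩ ⟨z, k⟩ (hxy : (h : X → X) x = (g : X → X) y)
    (hyz : (k : X → X) y = (h : X → X) z)
  apply hinj h h.2
  calc (h : X → X) ((k : X → X) x) = (k : X → X) ((h : X → X) x) := comm h k x
    _ = (g : X → X) ((k : X → X) y) := by rw [hxy, comm]
    _ = (h : X → X) ((g : X → X) z) := by rw [hyz, comm]

theorem of_mk_eq (hinj : ∀ f ∈ S, Injective f) (hcomm : ∀ f ∈ S, ∀ g ∈ S, f ∘ g = g ∘ f)
    {a b : X × S} (h : Quot.mk (PQRel S) a = Quot.mk (PQRel S) b) : PQRel S a b :=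
  (equivalence hinj hcomm).eqvGen_iff.mp (Quot.eqvGen_exact h)

end PQRel

theorem IsIota.injective (hinj : ∀ f ∈ S, Injective f)
    (hcomm : ∀ f ∈ S, ∀ g ∈ S, f ∘ g = g ∘ f) {ι : X → Quot (PQRel S)} (hι : IsIota S ι)
    {f : X → X} (hf : f ∈ S) : Injective ι := by
  intro x y hxy
  rw [hι x ⟨f, hf⟩, hι y ⟨f, hf⟩] at hxy
  exact hinj f hf (hinj f hf (PQRel.of_mk_eq hinj hcomm hxy))

namespace IsAct

variable {f g : X → X} {F G : Quot (PQRel S) → Quot (PQRel S)}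

theorem apply_iota (hF : IsAct S f F) (hf : f ∈ S) {ι : X → Quot (PQRel S)} (hι : IsIota S ι)
    (x : X) : F (ι x) = ι (f x) := by
  rw [hι x ⟨f, hf⟩, hF, hι (f x) ⟨f, hf⟩]

theorem injective (hinj : ∀ f ∈ S, Injective f) (hcomm : ∀ f ∈ S, ∀ g ∈ S, f ∘ g = g ∘ f)
    (hF : IsAct S f F) (hf : f ∈ S) : Injective F := by
  rintro ⟨x, g⟩ ⟨y, h⟩ (hxy : F (Quot.mk _ (x, g)) = F (Quot.mk _ (y, h)))
  rw [hF, hF] at hxy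
  have hfxy : f ((h : X → X) x) = f ((g : X → X) y) := by
    rw [← comp_apply (f := f), hcomm f hf h h.2, ← comp_apply (f := f), hcomm f hf g g.2]
    exact PQRel.of_mk_eq hinj hcomm hxy
  exact Quot.sound (hinj f hf hfxy)

theorem commute (hF : IsAct S f F) (hG : IsAct S g G) (hfg : Function.Commute f g) :
    Function.Commute F G := by
  rintro ⟨x, k⟩
  rw [hG, hF, hF, hG, hfg.eq]

theorem preimage_iota_image (hF : IsAct S f F) (hf : f ∈ S) {ι : X → Quot (PQRel S)}
    (hι : IsIota S ι) (hιinj : Injective ι) {B : Set (Quot (PQRel S))} (hB : B ⊆ range ι) :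
    ι ⁻¹' (F '' B) = f '' (ι ⁻¹' B) := by
  ext x
  constructor
  · rintro ⟨q, hqB, hq⟩
    obtain ⟨w, rfl⟩ := hB hqB
    exact ⟨w, hqB, hιinj (by rw [← hq, hF.apply_iota hf hι])⟩
  · rintro ⟨w, hw, rfl⟩
    exact ⟨ι w, hw, hF.apply_iota hf hι w⟩

end IsAct

/-- Measurability of `ι⁻¹ (F A)` does not depend on the witness `(f, F)` of `A ∈ B`. -/
theorem measurableSet_preimage_iota_image [MeasurableSpace X] {ι : X → Quot (PQRel S)}
    (hι : IsIota S ι) (hιinj : Injective ι) (hcomm : ∀ f ∈ S, ∀ g ∈ S, f ∘ g = g ∘ f)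
    {f g : X → X} {F G : Quot (PQRel S) → Quot (PQRel S)} {A : Set (Quot (PQRel S))}
    (hf : f ∈ S) (hF : IsAct S f F) (hf_img : ∀ E, MeasurableSet E → MeasurableSet (f '' E))
    (hg : g ∈ S) (hG : IsAct S g G) (hg_inj : Injective g) (hg_meas : Measurable g)
    (hFA : F '' A ⊆ range ι) (hGA : G '' A ⊆ range ι) (hGA_meas : MeasurableSet (ι ⁻¹' (G '' A))) :
    MeasurableSet (ι ⁻¹' (F '' A)) := by
  have hswap : g '' (ι ⁻¹' (F '' A)) = f '' (ι ⁻¹' (G '' A)) := by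
    rw [← hG.preimage_iota_image hg hι hιinj hFA, ← hF.preimage_iota_image hf hι hιinj hGA,
      ((hF.commute hG (congrFun (hcomm f hf g hg))).set_image A)]
  rw [← hg_inj.preimage_image (ι ⁻¹' (F '' A)), hswap]
  exact hg_meas (hf_img _ hGA_meas)

end

theorem nu_countably_additive_general {X : Type*} [MeasurableSpace X] (μ : Measure X)
    (S : Set (X → X))
    (hinj : ∀ f ∈ S, Function.Injective f)
    (hcomm : ∀ f ∈ S, ∀ g ∈ S, f ∘ g = g ∘ f)
    (hmeas : ∀ f ∈ S, Measurable f)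
    (himg : ∀ f ∈ S, ∀ E : Set X, MeasurableSet E → MeasurableSet (f '' E))
    (hhom : ∀ f ∈ S, ∃ α : ENNReal, 0 < α ∧ α ≠ ⊤ ∧
      ∀ E : Set X, MeasurableSet E → μ (f '' E) = α * μ E)
    (ι : X → Quot (PQRel S)) (hι : IsIota S ι)
    (ν : Set (Quot (PQRel S)) → ENNReal)
    (hν : ∀ (B : Set (Quot (PQRel S))) (f : X → X), f ∈ S →
      ∀ (α : ENNReal), 0 < α → α ≠ ⊤ →
      (∀ E : Set X, MeasurableSet E → μ (f '' E) = α * μ E) →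
      ∀ F : Quot (PQRel S) → Quot (PQRel S), IsAct S f F →
      F '' B ⊆ Set.range ι → MeasurableSet (ι ⁻¹' (F '' B)) →
      ν B = μ (ι ⁻¹' (F '' B)) / α)
    (A : ℕ → Set (Quot (PQRel S)))
    (hdisj : Pairwise (Function.onFun Disjoint A))
    (hAmem : ∀ n, MemB S ι (A n))
    (hUnion : MemB S ι (⋃ n, A n)) :
    ν (⋃ n, A n) = ∑' n, ν (A n) := by
  obtain ⟨f, hf, F, hF, hFU, hFU_meas⟩ := hUnion
  obtain ⟨α, hα0, hα_top, hαμ⟩ := hhom f hf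
  have hιinj := hι.injective hinj hcomm hf
  have hFA (n : ℕ) : F '' A n ⊆ range ι := (image_mono (subset_iUnion A n)).trans hFU
  have hFA_meas (n : ℕ) : MeasurableSet (ι ⁻¹' (F '' A n)) := by
    obtain ⟨g, hg, G, hG, hGA, hGA_meas⟩ := hAmem n
    exact measurableSet_preimage_iota_image hι hιinj hcomm hf hF (himg f hf) hg hG
      (hinj g hg) (hmeas g hg) (hFA n) hGA hGA_meas
  have hFA_disj : Pairwise (Disjoint on fun n => ι ⁻¹' (F '' A n)) := fun m n hmn =>
    ((disjoint_image_iff (hF.injective hinj hcomm hf)).mpr (hdisj hmn)).preimage ι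
  have hνA (n : ℕ) : ν (A n) = μ (ι ⁻¹' (F '' A n)) / α :=
    hν _ f hf α hα0 hα_top hαμ F hF (hFA n) (hFA_meas n)
  rw [hν _ f hf α hα0 hα_top hαμ F hF hFU hFU_meas, image_iUnion, preimage_iUnion,
    measure_iUnion hFA_disj hFA_meas]
  simp only [hνA, div_eq_mul_inv, ENNReal.tsum_mul_right]

/-- the set function `ν(B) = μ(f(B))/α_f` on the ring `B` is
countably additive: for pairwise disjoint `A₁, A₂, … ∈ B` with `⋃ₙ Aₙ ∈ B`,
`ν(⋃ₙ Aₙ) = Σₙ ν(Aₙ)`. -/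
theorem nu_countably_additive {X : Type*} [MeasurableSpace X] (μ : Measure X)
    (S : Set (X → X))
    (hinj : ∀ f ∈ S, Function.Injective f)
    (hcomp : ∀ f ∈ S, ∀ g ∈ S, f ∘ g ∈ S)
    (hcomm : ∀ f ∈ S, ∀ g ∈ S, f ∘ g = g ∘ f)
    (hmeas : ∀ f ∈ S, Measurable f)
    (himg : ∀ f ∈ S, ∀ E : Set X, MeasurableSet E → MeasurableSet (f '' E))
    (hhom : ∀ f ∈ S, ∃ α : ENNReal, 0 < α ∧ α ≠ ⊤ ∧
      ∀ E : Set X, MeasurableSet E → μ (f '' E) = α * μ E)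
    (ι : X → Quot (PQRel S)) (hι : IsIota S ι)
    (ν : Set (Quot (PQRel S)) → ENNReal)
    (hν : ∀ (B : Set (Quot (PQRel S))) (f : X → X), f ∈ S →
      ∀ (α : ENNReal), 0 < α → α ≠ ⊤ →
      (∀ E : Set X, MeasurableSet E → μ (f '' E) = α * μ E) →
      ∀ F : Quot (PQRel S) → Quot (PQRel S), IsAct S f F →
      F '' B ⊆ Set.range ι → MeasurableSet (ι ⁻¹' (F '' B)) →
      ν B = μ (ι ⁻¹' (F '' B)) / α)
    (A : ℕ → Set (Quot (PQRel S)))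
    (hdisj : Pairwise (Function.onFun Disjoint A))
    (hAmem : ∀ n, MemB S ι (A n))
    (hUnion : MemB S ι (⋃ n, A n)) :
    ν (⋃ n, A n) = ∑' n, ν (A n) :=
  nu_countably_additive_general μ S hinj hcomm hmeas himg hhom ι hι ν hν A hdisj hAmem hUnion
end
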